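/- For $\alpha \in (1,2)$, the symbol $p_\alpha(\theta)$ is nonnegative on $[-\pi,\pi]$ and vanishes only at $\theta = 0$, where it has a zero of order exactly $\alpha$: the limit $\lim_{\theta \to 0^+} p_\alpha(\theta)/\theta^\alpha$ exists, is finite, and is strictly positive. -/

import Mathlib

/-! The cosine factor of `p_α` is negative on all of `[-π, π]` and the sine factor vanishes only
at `0`. Writing `2 sin(θ/2) = θ sinc(θ/2)` turns `p_α(θ) / θ^α` into a function continuous at `0`,
whose value there is `-2 cos(απ/2) > 0`. -/

open Real Filter Topology

/-- Real form of the symbol `p_α` on `[-π,π]`. -/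
noncomputable def pReal (α θ : ℝ) : ℝ :=
  -2 * (2 * Real.sin (|θ| / 2)) ^ α * Real.cos (α / 2 * (π - |θ|) + |θ|)

open Set

/-- For `φ ∈ [0, π]` the phase `α/2 (π - φ) + φ` moves linearly from `απ/2` to `π`, so it stays
in `(π/2, 3π/2)` as long as `1 < α < 3`. -/
lemma cos_phase_neg {α φ : ℝ} (hα : 1 < α) (hα3 : α < 3) (hφ : φ ∈ Icc 0 π) :
    cos (α / 2 * (π - φ) + φ) < 0 := by
  obtain ⟨h0, hπ⟩ := hφ
  apply cos_neg_of_pi_div_two_lt_of_lt <;> nlinarith [pi_pos]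

lemma pReal_zero {α : ℝ} (hα : α ≠ 0) : pReal α 0 = 0 := by
  simp [pReal, zero_rpow hα]

lemma pReal_pos {α θ : ℝ} (hα : 1 < α) (hα3 : α < 3) (hθ : θ ∈ Icc (-π) π) (hθ0 : θ ≠ 0) :
    0 < pReal α θ := by
  have habs : |θ| ∈ Icc 0 π := ⟨abs_nonneg θ, abs_le.2 hθ⟩
  have hsin : 0 < sin (|θ| / 2) :=
    sin_pos_of_pos_of_lt_pi (by positivity) (by linarith [habs.2, pi_pos])
  have hpow : 0 < (2 * sin (|θ| / 2)) ^ α := rpow_pos_of_pos (by positivity) α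
  have hcos := cos_phase_neg hα hα3 habs
  unfold pReal
  nlinarith

lemma pReal_div_rpow_eq {α θ : ℝ} (h0 : 0 < θ) (hπ : θ ≤ 2 * π) :
    pReal α θ / θ ^ α = -2 * sinc (θ / 2) ^ α * cos (α / 2 * (π - θ) + θ) := by
  have hsinc : 0 ≤ sinc (θ / 2) := by
    rw [sinc_of_ne_zero (by positivity)]
    exact div_nonneg (sin_nonneg_of_nonneg_of_le_pi (by positivity) (by linarith)) (by positivity)
  have hsin : 2 * sin (θ / 2) = θ * sinc (θ / 2) := by
    rw [sinc_of_ne_zero (by positivity)]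
    field_simp
  rw [pReal, abs_of_pos h0, hsin, mul_rpow h0.le hsinc]
  field_simp

lemma tendsto_pReal_div_rpow (α : ℝ) :
    Tendsto (fun θ => pReal α θ / θ ^ α) (𝓝[>] 0) (𝓝 (-2 * cos (α / 2 * π))) := by
  have hcont : ContinuousAt (fun θ => -2 * sinc (θ / 2) ^ α * cos (α / 2 * (π - θ) + θ)) 0 := by
    have : ContinuousAt (fun θ : ℝ => sinc (θ / 2) ^ α) 0 :=
      (continuous_sinc.comp (continuous_id.div_const 2)).continuousAt.rpow_const
        (Or.inl (by simp))
    fun_prop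
  have h := tendsto_nhdsWithin_of_tendsto_nhds (s := Ioi 0) hcont.tendsto
  simp only [zero_div, sinc_zero, one_rpow, sub_zero, add_zero, mul_one] at h
  refine h.congr' ?_
  filter_upwards [Ioo_mem_nhdsGT two_pi_pos] with θ hθ
  exact (pReal_div_rpow_eq hθ.1 hθ.2.le).symm

theorem stmt_6 (α : ℝ) (hα : 1 < α) (hα2 : α < 2) :
    (∀ θ ∈ Set.Icc (-π) π, 0 ≤ pReal α θ) ∧
    (∀ θ ∈ Set.Icc (-π) π, pReal α θ = 0 ↔ θ = 0) ∧
    (∃ L : ℝ, 0 < L ∧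
      Tendsto (fun θ : ℝ => pReal α θ / θ ^ α) (nhdsWithin 0 (Set.Ioi 0)) (nhds L)) := by
  have hα3 : α < 3 := by linarith
  have hzero : pReal α 0 = 0 := pReal_zero (by linarith)
  refine ⟨fun θ hθ => ?_, fun θ hθ => ⟨fun h => ?_, ?_⟩, -2 * cos (α / 2 * π), ?_,
    tendsto_pReal_div_rpow α⟩
  · rcases eq_or_ne θ 0 with rfl | hθ0
    · exact hzero.ge
    · exact (pReal_pos hα hα3 hθ hθ0).le
  · by_contra hθ0
    exact (pReal_pos hα hα3 hθ hθ0).ne' h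
  · rintro rfl
    exact hzero
  · have hcos := cos_phase_neg hα hα3 (left_mem_Icc.2 pi_pos.le)
    rw [sub_zero, add_zero] at hcos
    linarith
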